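/- Let (P, Ω) be a poset with an ℝ-flow, let ε ≥ 0, and let I, J ⊆ P be intervals such that all pairwise intersections among shifts of I and J occurring below are intervals (e.g. I, J belong to an intersection-closed family of intervals closed under the action of Ω). Then the ordered pair (C(I), C(J)) is left ε-interleaved if and only if either I is 2ε-trivial, or the following three conditions hold: (1) there exists a nonzero morphism C(I) → C(J(ε)); (2) there exists a nonzero morphism C(J) → C(I(ε)); (3) I ∩ I(2ε) is nonempty and I ∩ I(2ε) ⊆ J(ε). -/

import Mathlib

open CategoryTheory
open scoped Classical ENNReal NNReal

set_option linter.unusedSectionVars false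
set_option linter.unusedVariables false

/-! ## Posets, intervals, flows -/

variable {P : Type} [PartialOrder P]

/-- A subset of a poset is poset-convex if it contains every point between two of its points. -/
def PosetConvex (I : Set P) : Prop :=
  ∀ ⦃p q r : P⦄, p ∈ I → q ∈ I → p ≤ r → r ≤ q → r ∈ I

/-- A subset of a poset is poset-connected if any two of its points are joined by a
zigzag path inside the subset. -/
def PosetConnected (I : Set P) : Prop :=
  ∀ p ∈ I, ∀ q ∈ I,
    Relation.ReflTransGen (fun a b => b ∈ I ∧ (a ≤ b ∨ b ≤ a)) p q

/-- An interval in a poset is a poset-convex and poset-connected subset. -/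
def IsInterval (I : Set P) : Prop := PosetConvex I ∧ PosetConnected I

/-- `Q` is a poset-connected component of `U`: a poset-connected subset of `U`, maximal with
respect to inclusion among poset-connected subsets of `U`. -/
def IsPosetComponent (U Q : Set P) : Prop :=
  Q ⊆ U ∧ PosetConnected Q ∧
    ∀ Q' : Set P, Q' ⊆ U → PosetConnected Q' → Q ⊆ Q' → Q' = Q

/-- A subset `Q` of `I ∩ J` is `(I,J)`-valid. -/
def IsValid (I J Q : Set P) : Prop :=
  ∀ p ∈ Q, (∀ q ∈ I, q ≤ p → q ∈ J) ∧ (∀ r ∈ J, p ≤ r → r ∈ I)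

/-- An `ℝ`-flow on a poset. -/
structure RFlow (P : Type) [PartialOrder P] where
  Ω : ℝ → P → P
  mono : ∀ t : ℝ, Monotone (Ω t)
  mono_param : ∀ {t s : ℝ}, t ≤ s → ∀ p : P, Ω t p ≤ Ω s p
  add : ∀ t s : ℝ, ∀ p : P, Ω (t + s) p = Ω t (Ω s p)
  zero : ∀ p : P, Ω 0 p = p

/-- The `t`-shift `I(t)` of a subset of a poset with an `ℝ`-flow. -/
def RFlow.shiftSet (Φ : RFlow P) (I : Set P) (t : ℝ) : Set P := {p : P | Φ.Ω t p ∈ I}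

lemma RFlow.self_le (Φ : RFlow P) {t : ℝ} (ht : 0 ≤ t) (p : P) : p ≤ Φ.Ω t p := by
  have h := Φ.mono_param ht p
  rwa [Φ.zero] at h

lemma RFlow.self_le_twice (Φ : RFlow P) {t : ℝ} (ht : 0 ≤ t) (p : P) :
    p ≤ Φ.Ω t (Φ.Ω t p) :=
  (Φ.self_le ht p).trans (Φ.self_le ht _)

lemma RFlow.omega_neg_omega (Φ : RFlow P) (t : ℝ) (p : P) : Φ.Ω (-t) (Φ.Ω t p) = p := by
  have h := Φ.add (-t) t p
  rw [neg_add_cancel, Φ.zero] at h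
  exact h.symm

lemma RFlow.omega_omega_neg (Φ : RFlow P) (t : ℝ) (p : P) : Φ.Ω t (Φ.Ω (-t) p) = p := by
  have h := Φ.add t (-t) p
  rw [add_neg_cancel, Φ.zero] at h
  exact h.symm

lemma RFlow.posetConvex_shiftSet (Φ : RFlow P) {I : Set P} (hI : PosetConvex I) (t : ℝ) :
    PosetConvex (Φ.shiftSet I t) := by
  intro p q r hp hq hpr hrq
  exact hI hp hq (Φ.mono t hpr) (Φ.mono t hrq)

lemma RFlow.posetConnected_shiftSet (Φ : RFlow P) {I : Set P} (hI : PosetConnected I) (t : ℝ) :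
    PosetConnected (Φ.shiftSet I t) := by
  intro p hp q hq
  have h := hI _ hp _ hq
  have h2 := Relation.ReflTransGen.lift
    (r := fun a b : P => b ∈ I ∧ (a ≤ b ∨ b ≤ a))
    (p := fun a b : P => b ∈ Φ.shiftSet I t ∧ (a ≤ b ∨ b ≤ a)) (fun x : P => Φ.Ω (-t) x)
    (fun a b hab => ⟨show Φ.Ω t (Φ.Ω (-t) b) ∈ I by rw [Φ.omega_omega_neg]; exact hab.1,
      hab.2.imp (fun h' => Φ.mono (-t) h') (fun h' => Φ.mono (-t) h')⟩) _ _ h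
  simpa only [Function.onFun, Φ.omega_neg_omega] using h2

lemma RFlow.isInterval_shiftSet (Φ : RFlow P) {I : Set P} (hI : IsInterval I) (t : ℝ) :
    IsInterval (Φ.shiftSet I t) :=
  ⟨Φ.posetConvex_shiftSet hI.1 t, Φ.posetConnected_shiftSet hI.2 t⟩

lemma RFlow.shiftSet_nonempty (Φ : RFlow P) {I : Set P} (hI : I.Nonempty) (t : ℝ) :
    (Φ.shiftSet I t).Nonempty := by
  obtain ⟨x, hx⟩ := hI
  exact ⟨Φ.Ω (-t) x, show Φ.Ω t (Φ.Ω (-t) x) ∈ I by rw [Φ.omega_omega_neg]; exact hx⟩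

/-! ## Characteristic (interval) persistence modules -/

variable (K : Type) [Field K]

/-- The pointwise value of the characteristic module of `I`, as a submodule of `K`. -/
noncomputable def charSub (I : Set P) (p : P) : Submodule K K :=
  if p ∈ I then ⊤ else ⊥

lemma charSub_eq_top {I : Set P} {p : P} (hp : p ∈ I) : charSub K I p = ⊤ := if_pos hp

lemma charSub_eq_bot {I : Set P} {p : P} (hp : p ∉ I) : charSub K I p = ⊥ := if_neg hp

lemma charElt_eq_zero {I : Set P} {p : P} (hp : p ∉ I) (x : ↥(charSub K I p)) : x = 0 := by
  exact Subtype.ext ((Submodule.eq_bot_iff _).mp (charSub_eq_bot K hp) (x : K) x.2)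

/-- The structure maps of the characteristic module of `I`. -/
noncomputable def charMap (I : Set P) (p q : P) :
    ↥(charSub K I p) →ₗ[K] ↥(charSub K I q) :=
  if h : p ∈ I ∧ q ∈ I then
    { toFun := fun x => ⟨(x : K), by rw [charSub_eq_top K h.2]; exact Submodule.mem_top⟩
      map_add' := fun x y => rfl
      map_smul' := fun c x => rfl }
  else 0

lemma charMap_id (I : Set P) (p : P) : charMap K I p p = LinearMap.id := by
  by_cases hp : p ∈ I
  · simp only [charMap, dif_pos (And.intro hp hp)]
    rfl
  · ext x
    rw [charElt_eq_zero K hp x]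
    simp

lemma charMap_comp {I : Set P} (hI : PosetConvex I) {p q r : P} (hpq : p ≤ q) (hqr : q ≤ r) :
    (charMap K I q r).comp (charMap K I p q) = charMap K I p r := by
  by_cases hp : p ∈ I
  · by_cases hr : r ∈ I
    · have hq : q ∈ I := hI hp hr hpq hqr
      ext x
      simp only [charMap, dif_pos (And.intro hp hq), dif_pos (And.intro hq hr),
        dif_pos (And.intro hp hr), LinearMap.comp_apply, LinearMap.coe_mk, AddHom.coe_mk]
    · ext x
      exact congrArg Subtype.val
        ((charElt_eq_zero K hr ((charMap K I q r).comp (charMap K I p q) x)).trans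
          (charElt_eq_zero K hr (charMap K I p r x)).symm)
  · ext x
    rw [charElt_eq_zero K hp x]
    simp

/-- The characteristic persistence module `C(I)` of a poset-convex subset `I`. -/
noncomputable def charMod (I : Set P) (hI : PosetConvex I) : P ⥤ ModuleCat K where
  obj p := ModuleCat.of K ↥(charSub K I p)
  map {p q} h := ModuleCat.ofHom (charMap K I p q)
  map_id p := by rw [charMap_id K I p]; rfl
  map_comp {p q r} h1 h2 := by rw [← charMap_comp K hI (leOfHom h1) (leOfHom h2)]; rfl

/-- The zero persistence module, realized as the characteristic module of the empty interval. -/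
noncomputable def zeroPMod : P ⥤ ModuleCat K :=
  charMod K (∅ : Set P) (fun _ _ _ hp _ _ _ => absurd hp (Set.notMem_empty _))

/-! ## Barcodes and interval-decomposable modules -/

/-- A barcode over a poset: a multiset of nonempty intervals, encoded as an indexed family. -/
structure Barcode (P : Type) [PartialOrder P] where
  ι : Type
  B : ι → Set P
  interval : ∀ a : ι, IsInterval (B a)
  nonempty : ∀ a : ι, (B a).Nonempty

/-- The interval-decomposable module `⊕_{a} C(B a)` associated to a barcode. -/
noncomputable def bcMod (D : Barcode P) : P ⥤ ModuleCat K where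
  obj p := ModuleCat.of K (Π₀ a : D.ι, ↥(charSub K (D.B a) p))
  map {p q} h := ModuleCat.ofHom (DFinsupp.mapRange.linearMap (fun a => charMap K (D.B a) p q))
  map_id p := by
    have h : (fun a : D.ι => charMap K (D.B a) p p)
        = fun a : D.ι => (LinearMap.id : ↥(charSub K (D.B a) p) →ₗ[K] ↥(charSub K (D.B a) p)) := by
      funext a; exact charMap_id K (D.B a) p
    show ModuleCat.ofHom (DFinsupp.mapRange.linearMap (fun a => charMap K (D.B a) p p)) = 𝟙 _
    rw [h, DFinsupp.mapRange.linearMap_id]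
    rfl
  map_comp {p q r} h1 h2 := by
    have h : (fun a : D.ι => charMap K (D.B a) p r)
        = fun a : D.ι => (charMap K (D.B a) q r).comp (charMap K (D.B a) p q) := by
      funext a
      exact (charMap_comp K (D.interval a).1 (leOfHom h1) (leOfHom h2)).symm
    show ModuleCat.ofHom (DFinsupp.mapRange.linearMap (fun a => charMap K (D.B a) p r)) = _
    rw [h, DFinsupp.mapRange.linearMap_comp]
    rfl

/-- `M` is interval-decomposable with barcode `D`. -/
def IsDecompositionOf (D : Barcode P) (M : P ⥤ ModuleCat K) : Prop :=
  Nonempty (M ≅ bcMod K D)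

/-- The shift of a barcode along a flow. -/
noncomputable def Barcode.shift (D : Barcode P) (Φ : RFlow P) (t : ℝ) : Barcode P where
  ι := D.ι
  B a := Φ.shiftSet (D.B a) t
  interval a := Φ.isInterval_shiftSet (D.interval a) t
  nonempty a := Φ.shiftSet_nonempty (D.nonempty a) t

/-! ## Shifts of modules, interleavings, distances -/

/-- The shift `M(t)` of a persistence module along a flow. -/
noncomputable def Pshift (Φ : RFlow P) (t : ℝ) (M : P ⥤ ModuleCat K) : P ⥤ ModuleCat K :=
  (Φ.mono t).functor ⋙ M

/-- The ordered pair `(M, N)` is left `ε`-interleaved. -/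
noncomputable def LeftInterleaved (Φ : RFlow P) {ε : ℝ} (hε : 0 ≤ ε)
    (M N : P ⥤ ModuleCat K) : Prop :=
  ∃ (f : M ⟶ Pshift K Φ ε N) (g : N ⟶ Pshift K Φ ε M),
    ∀ p : P, f.app p ≫ g.app (Φ.Ω ε p) = M.map (homOfLE (Φ.self_le_twice hε p))

/-- `M` and `N` are `ε`-interleaved. -/
noncomputable def Interleaved (Φ : RFlow P) {ε : ℝ} (hε : 0 ≤ ε)
    (M N : P ⥤ ModuleCat K) : Prop :=
  ∃ (f : M ⟶ Pshift K Φ ε N) (g : N ⟶ Pshift K Φ ε M),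
    (∀ p : P, f.app p ≫ g.app (Φ.Ω ε p) = M.map (homOfLE (Φ.self_le_twice hε p))) ∧
    (∀ p : P, g.app p ≫ f.app (Φ.Ω ε p) = N.map (homOfLE (Φ.self_le_twice hε p)))

/-- The interleaving distance between two persistence modules. -/
noncomputable def dI (Φ : RFlow P) (M N : P ⥤ ModuleCat K) : ℝ≥0∞ :=
  ⨅ (ε : NNReal) (_ : Interleaved K Φ ε.coe_nonneg M N), (ε : ℝ≥0∞)

/-- An interval `I` is `t`-trivial if the transition morphism `C(I) → C(I(t))` vanishes. -/
noncomputable def IsTrivialIv (Φ : RFlow P) {t : ℝ} (ht : 0 ≤ t)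
    (I : Set P) (hI : PosetConvex I) : Prop :=
  ∀ p : P, (charMod K I hI).map (homOfLE (Φ.self_le ht p)) = 0

/-- An `ε`-correspondence between two barcodes. -/
noncomputable def IsCorrespondence (Φ : RFlow P) {ε : ℝ} (hε : 0 ≤ ε)
    (DM DN : Barcode P) (σ : Set (DM.ι × DN.ι)) : Prop :=
  (∀ ab ∈ σ, Interleaved K Φ hε
      (charMod K (DM.B ab.1) (DM.interval ab.1).1) (charMod K (DN.B ab.2) (DN.interval ab.2).1)) ∧
  (∀ a : DM.ι, (∀ b : DN.ι, (a, b) ∉ σ) →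
      Interleaved K Φ hε (charMod K (DM.B a) (DM.interval a).1) (zeroPMod K)) ∧
  (∀ b : DN.ι, (∀ a : DM.ι, (a, b) ∉ σ) →
      Interleaved K Φ hε (zeroPMod K) (charMod K (DN.B b) (DN.interval b).1))

/-- An `ε`-matching between two barcodes. -/
noncomputable def IsMatching (Φ : RFlow P) {ε : ℝ} (hε : 0 ≤ ε)
    (DM DN : Barcode P) (σ : Set (DM.ι × DN.ι)) : Prop :=
  IsCorrespondence K Φ hε DM DN σ ∧
  (∀ a b b', (a, b) ∈ σ → (a, b') ∈ σ → b = b') ∧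
  (∀ a a' b, (a, b) ∈ σ → (a', b) ∈ σ → a = a')

/-- The Hausdorff distance between (modules with) barcodes `DM`, `DN`. -/
noncomputable def dH (Φ : RFlow P) (DM DN : Barcode P) : ℝ≥0∞ :=
  ⨅ (ε : NNReal) (_ : ∃ σ : Set (DM.ι × DN.ι), IsCorrespondence K Φ ε.coe_nonneg DM DN σ),
    (ε : ℝ≥0∞)

/-- The bottleneck distance between (modules with) barcodes `DM`, `DN`. -/
noncomputable def dB (Φ : RFlow P) (DM DN : Barcode P) : ℝ≥0∞ :=
  ⨅ (ε : NNReal) (_ : ∃ σ : Set (DM.ι × DN.ι), IsMatching K Φ ε.coe_nonneg DM DN σ),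
    (ε : ℝ≥0∞)

/-!
A morphism `f : C(A) ⟶ C(B)` acts at every point `p` as multiplication by a scalar `charCoeff f p`,
which vanishes off `A ∩ B`. Naturality forces `charCoeff f q = charCoeff f p` whenever `p ≤ q`,
`p ∈ A` and `q ∈ B`; hence on a poset-connected `A ∩ B` the scalar is constant, and if `f ≠ 0`
it is a nonzero constant, which makes `A ∩ B` valid. Conversely, validity is exactly what makes
the indicator of `A ∩ B` natural.

At a point `p ∈ I ∩ I(2ε)` the transition map `φ^{2ε}_p` is the identity of `K`, so it can only
factor as `g_{Ω_ε p} ∘ f_p` if both factors are nonzero and `Ω_ε p ∈ J`. Conversely, the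
indicator morphisms `C(I) ⟶ C(J(ε))` and `C(J) ⟶ C(I(ε))` compose to `φ^{2ε}` exactly when
`I ∩ I(2ε) ⊆ J(ε)`; and if `I` is `2ε`-trivial the zero morphisms already interleave.
-/

open CategoryTheory.Limits

@[simp]
lemma RFlow.mem_shiftSet (Φ : RFlow P) {I : Set P} {t : ℝ} {p : P} :
    p ∈ Φ.shiftSet I t ↔ Φ.Ω t p ∈ I :=
  Iff.rfl

lemma RFlow.Ω_two_mul (Φ : RFlow P) (t : ℝ) (p : P) : Φ.Ω (2 * t) p = Φ.Ω t (Φ.Ω t p) := by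
  rw [two_mul, Φ.add]

lemma RFlow.shiftSet_eq_image (Φ : RFlow P) (S : Set P) (t : ℝ) :
    Φ.shiftSet S t = Φ.Ω (-t) '' S := by
  ext p
  refine ⟨fun hp => ⟨Φ.Ω t p, hp, Φ.omega_neg_omega t p⟩, ?_⟩
  rintro ⟨s, hs, rfl⟩
  rwa [Φ.mem_shiftSet, Φ.omega_omega_neg]

lemma PosetConnected.apply_eq {α : Type*} {S : Set P} (hS : PosetConnected S) {c : P → α}
    (hc : ∀ a ∈ S, ∀ b ∈ S, a ≤ b → c a = c b) {p q : P} (hp : p ∈ S) (hq : q ∈ S) :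
    c p = c q := by
  suffices ∀ r, Relation.ReflTransGen (fun a b => b ∈ S ∧ (a ≤ b ∨ b ≤ a)) p r →
      r ∈ S ∧ c p = c r from (this q (hS p hp q hq)).2
  intro r hr
  induction hr with
  | refl => exact ⟨hp, rfl⟩
  | tail _ hbc ih =>
    obtain ⟨hb, hpb⟩ := ih
    obtain ⟨hc', hle | hle⟩ := hbc
    · exact ⟨hc', hpb.trans (hc _ hb _ hc' hle)⟩
    · exact ⟨hc', hpb.trans (hc _ hc' _ hb hle).symm⟩

section CharacteristicModules

variable {A B : Set P} {p q : P}

lemma charSub_val_eq_zero (hp : p ∉ A) (x : charSub K A p) : (x : K) = 0 :=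
  congrArg Subtype.val (charElt_eq_zero K hp x)

/-- `charMap K I p q` is definitionally `charTransfer K I I p q`. -/
noncomputable def charTransfer (A B : Set P) (p q : P) : charSub K A p →ₗ[K] charSub K B q :=
  if h : p ∈ A ∧ q ∈ B then
    { toFun := fun x => ⟨(x : K), by rw [charSub_eq_top K h.2]; exact Submodule.mem_top⟩
      map_add' := fun _ _ => rfl
      map_smul' := fun _ _ => rfl }
  else 0

lemma charTransfer_apply_val (x : charSub K A p) :
    (charTransfer K A B p q x : K) = if q ∈ B then (x : K) else 0 := by
  by_cases hp : p ∈ A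
  · by_cases hq : q ∈ B
    · simp only [charTransfer, dif_pos (And.intro hp hq), if_pos hq]; rfl
    · simp only [charTransfer, if_neg hq, dif_neg (fun h : p ∈ A ∧ q ∈ B => hq h.2)]; rfl
  · simp [charElt_eq_zero K hp x]

lemma charMap_apply_val (I : Set P) (x : charSub K I p) :
    (charMap K I p q x : K) = if q ∈ I then (x : K) else 0 :=
  charTransfer_apply_val K x

lemma charMod_hom_ext {hA : PosetConvex A} {hB : PosetConvex B}
    {u v : (charMod K A hA).obj p ⟶ (charMod K B hB).obj q}
    (h : ∀ x : charSub K A p, (u.hom x).val = (v.hom x).val) : u = v :=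
  ModuleCat.hom_ext (LinearMap.ext fun x => Subtype.ext (h x))

lemma isZero_charMod_obj (hA : PosetConvex A) (hp : p ∉ A) : IsZero ((charMod K A hA).obj p) :=
  have : Subsingleton ((charMod K A hA).obj p) :=
    ⟨fun x y => (charElt_eq_zero K hp x).trans (charElt_eq_zero K hp y).symm⟩
  ModuleCat.isZero_of_subsingleton _

lemma charMod_map_eq_zero_iff (hA : PosetConvex A) (h : p ⟶ q) :
    (charMod K A hA).map h = 0 ↔ ¬(p ∈ A ∧ q ∈ A) := by
  refine ⟨fun h0 ⟨hp, hq⟩ => ?_, fun hpq => ?_⟩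
  · have h1 := congrArg (fun u => (u.hom ⟨1, by rw [charSub_eq_top K hp]; trivial⟩).val) h0
    simp only [ModuleCat.hom_zero] at h1
    change (charMap K A p q _ : K) = 0 at h1
    rw [charMap_apply_val, if_pos hq] at h1
    exact one_ne_zero h1
  · refine charMod_hom_ext K fun x => ?_
    change (charMap K A p q x : K) = 0
    rw [charMap_apply_val]
    split_ifs with hq
    · exact charSub_val_eq_zero K (fun hp => hpq ⟨hp, hq⟩) x
    · rfl

lemma isTrivialIv_iff (Φ : RFlow P) {t : ℝ} (ht : 0 ≤ t) (hA : PosetConvex A) :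
    IsTrivialIv K Φ ht A hA ↔ A ∩ Φ.shiftSet A t = ∅ := by
  simp only [IsTrivialIv, charMod_map_eq_zero_iff, Set.eq_empty_iff_forall_notMem,
    Set.mem_inter_iff, RFlow.mem_shiftSet]

noncomputable def charOne (A : Set P) (p : P) : charSub K A p :=
  if h : p ∈ A then ⟨1, by rw [charSub_eq_top K h]; trivial⟩ else 0

lemma charOne_val : (charOne K A p : K) = if p ∈ A then 1 else 0 := by
  unfold charOne
  split_ifs <;> rfl

lemma eq_val_smul_charOne (x : charSub K A p) : x = (x : K) • charOne K A p := by
  apply Subtype.ext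
  by_cases hp : p ∈ A
  · simp [charOne_val, hp]
  · simp [charSub_val_eq_zero K hp x]

variable {hA : PosetConvex A} {hB : PosetConvex B}

/-- `(f.app p).hom` with domain and codomain unfolded to `charSub`, so that the lemmas about
`charSub` rewrite inside it. -/
noncomputable def charApp (f : charMod K A hA ⟶ charMod K B hB) (p : P) :
    charSub K A p →ₗ[K] charSub K B p :=
  (f.app p).hom

/-- The scalar by which `f` acts at `p`. -/
noncomputable def charCoeff (f : charMod K A hA ⟶ charMod K B hB) (p : P) : K :=
  (charApp K f p (charOne K A p) : K)

variable (f : charMod K A hA ⟶ charMod K B hB)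

lemma charApp_naturality (hpq : p ≤ q) (x : charSub K A p) :
    charApp K f q (charMap K A p q x) = charMap K B p q (charApp K f p x) :=
  congrArg (fun u => u.hom x) (f.naturality (homOfLE hpq))

lemma charApp_apply_val (x : charSub K A p) : (charApp K f p x : K) = x * charCoeff K f p := by
  conv_lhs => rw [eq_val_smul_charOne K x]
  rw [map_smul]
  rfl

lemma charCoeff_eq_zero_of_notMem_left (hp : p ∉ A) : charCoeff K f p = 0 := by
  simp [charCoeff, charOne, hp]

lemma charCoeff_eq_zero_of_notMem_right (hp : p ∉ B) : charCoeff K f p = 0 :=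
  charSub_val_eq_zero K hp _

lemma mem_inter_of_charCoeff_ne_zero (hf : charCoeff K f p ≠ 0) : p ∈ A ∩ B :=
  ⟨by_contra fun hp => hf (charCoeff_eq_zero_of_notMem_left K f hp),
    by_contra fun hp => hf (charCoeff_eq_zero_of_notMem_right K f hp)⟩

lemma eq_zero_of_charCoeff_eq_zero (h : ∀ p, charCoeff K f p = 0) : f = 0 := by
  ext p : 2
  refine charMod_hom_ext K fun x => ?_
  change (charApp K f p x : K) = 0
  rw [charApp_apply_val, h, mul_zero]

lemma charCoeff_eq_of_le (hpq : p ≤ q) (hp : p ∈ A) (hq : q ∈ B) :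
    charCoeff K f q = charCoeff K f p := by
  have h := congrArg Subtype.val (charApp_naturality K f hpq (charOne K A p))
  rw [charApp_apply_val, charMap_apply_val, charMap_apply_val, charOne_val, if_pos hp,
    if_pos hq] at h
  change _ = charCoeff K f p at h
  by_cases hqA : q ∈ A
  · rwa [if_pos hqA, one_mul] at h
  · rw [charCoeff_eq_zero_of_notMem_left K f hqA]
    simpa [hqA] using h

lemma isValid_of_charCoeff_ne_zero {Q : Set P} (hQ : ∀ p ∈ Q, charCoeff K f p ≠ 0) :
    IsValid A B Q := by
  intro p hp
  obtain ⟨hpA, hpB⟩ := mem_inter_of_charCoeff_ne_zero K f (hQ p hp)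
  refine ⟨fun a haA hap => by_contra fun haB => hQ p hp ?_,
    fun r hrB hpr => by_contra fun hrA => hQ p hp ?_⟩
  · rw [charCoeff_eq_of_le K f hap haA hpB, charCoeff_eq_zero_of_notMem_right K f haB]
  · rw [← charCoeff_eq_of_le K f hpr hpA hrB, charCoeff_eq_zero_of_notMem_left K f hrA]

lemma isValid_inter_of_ne_zero (hconn : PosetConnected (A ∩ B)) (hf : f ≠ 0) :
    IsValid A B (A ∩ B) := by
  obtain ⟨p₀, hp₀⟩ : ∃ p, charCoeff K f p ≠ 0 := by
    by_contra! h
    exact hf (eq_zero_of_charCoeff_eq_zero K f h)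
  refine isValid_of_charCoeff_ne_zero K f fun p hp => ?_
  rwa [hconn.apply_eq (fun a ha b hb hab => (charCoeff_eq_of_le K f hab ha.1 hb.2).symm) hp
    (mem_inter_of_charCoeff_ne_zero K f hp₀)]

end CharacteristicModules

/-- The morphism that is the identity of `K` at the points of `A ∩ B`. -/
noncomputable def charInd {A B : Set P} (hA : PosetConvex A) (hB : PosetConvex B)
    (hv : IsValid A B (A ∩ B)) : charMod K A hA ⟶ charMod K B hB where
  app p := ModuleCat.ofHom (charTransfer K A B p p)
  naturality p q h := by
    refine charMod_hom_ext K fun x => ?_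
    change (charTransfer K A B q q (charMap K A p q x) : K)
      = (charMap K B p q (charTransfer K A B p p x) : K)
    simp only [charTransfer_apply_val, charMap_apply_val]
    by_cases hp : p ∈ A
    · have hpq := leOfHom h
      by_cases hq : q ∈ B
      · by_cases hqA : q ∈ A
        · simp [hq, hqA, (hv q ⟨hqA, hq⟩).1 p hp hpq]
        · simpa [hq, hqA] using fun hpB => absurd ((hv p ⟨hp, hpB⟩).2 q hq hpq) hqA
      · simp [hq]
    · simp [charSub_val_eq_zero K hp x]

lemma charApp_charInd_apply_val {A B : Set P} {hA : PosetConvex A} {hB : PosetConvex B}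
    {hv : IsValid A B (A ∩ B)} {p : P} (x : charSub K A p) :
    (charApp K (charInd K hA hB hv) p x : K) = if p ∈ B then (x : K) else 0 :=
  charTransfer_apply_val K x

section Interleaving

variable (Φ : RFlow P) {ε : ℝ} (hε : 0 ≤ ε) {I J : Set P} (hI : PosetConvex I)
  (hJ : PosetConvex J)

lemma leftInterleaved_of_isTrivialIv (h2ε : 0 ≤ 2 * ε) (N : P ⥤ ModuleCat K)
    (htriv : IsTrivialIv K Φ h2ε I hI) : LeftInterleaved K Φ hε (charMod K I hI) N := by
  rw [isTrivialIv_iff, Set.eq_empty_iff_forall_notMem] at htriv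
  refine ⟨0, 0, fun p => comp_zero.trans ((charMod_map_eq_zero_iff K hI _).2 ?_).symm⟩
  rintro ⟨hp, hp2⟩
  exact htriv p ⟨hp, by rwa [RFlow.mem_shiftSet, Φ.Ω_two_mul]⟩

lemma leftInterleaved_of_isValid
    (hIJ : IsValid I (Φ.shiftSet J ε) (I ∩ Φ.shiftSet J ε))
    (hJI : IsValid J (Φ.shiftSet I ε) (J ∩ Φ.shiftSet I ε))
    (hsub : I ∩ Φ.shiftSet I (2 * ε) ⊆ Φ.shiftSet J ε) :
    LeftInterleaved K Φ hε (charMod K I hI) (charMod K J hJ) := by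
  set f := charInd K hI (Φ.posetConvex_shiftSet hJ ε) hIJ
  set g := charInd K hJ (Φ.posetConvex_shiftSet hI ε) hJI
  refine ⟨f, g, fun p => charMod_hom_ext K (B := I) (hB := hI) fun x => ?_⟩
  change (charApp K g (Φ.Ω ε p) (charApp K f p x) : K) = (charMap K I p _ x : K)
  have hf : (charApp K f p x : K) = if Φ.Ω ε p ∈ J then (x : K) else 0 :=
    charApp_charInd_apply_val K x
  refine (charApp_charInd_apply_val K _).trans ?_
  simp only [charMap_apply_val, RFlow.mem_shiftSet]
  split_ifs with hp2
  · by_cases hp : p ∈ I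
    · exact hf.trans (if_pos (hsub ⟨hp, by rwa [RFlow.mem_shiftSet, Φ.Ω_two_mul]⟩))
    · exact hf.trans (by simp [charSub_val_eq_zero K hp x])
  · rfl

lemma LeftInterleaved.exists_ne_zero_and_subset
    (h : LeftInterleaved K Φ hε (charMod K I hI) (charMod K J hJ))
    (hne : (I ∩ Φ.shiftSet I (2 * ε)).Nonempty) :
    (∃ f : charMod K I hI ⟶ charMod K (Φ.shiftSet J ε) (Φ.posetConvex_shiftSet hJ ε), f ≠ 0) ∧
      (∃ g : charMod K J hJ ⟶ charMod K (Φ.shiftSet I ε) (Φ.posetConvex_shiftSet hI ε), g ≠ 0) ∧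
      I ∩ Φ.shiftSet I (2 * ε) ⊆ Φ.shiftSet J ε := by
  obtain ⟨f, g, hfg⟩ := h
  have hcomp : ∀ p ∈ I ∩ Φ.shiftSet I (2 * ε), f.app p ≫ g.app (Φ.Ω ε p) ≠ 0 := by
    rintro p ⟨hp, hp2⟩ h0
    exact (charMod_map_eq_zero_iff K hI _).1 ((hfg p).symm.trans h0)
      ⟨hp, by rwa [← Φ.Ω_two_mul]⟩
  have hg : ∀ p ∈ I ∩ Φ.shiftSet I (2 * ε), g.app (Φ.Ω ε p) ≠ 0 := fun p hp h0 =>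
    hcomp p hp (by rw [h0]; exact comp_zero)
  obtain ⟨p, hp⟩ := hne
  refine ⟨⟨f, fun h0 => hcomp p hp (by rw [h0]; exact zero_comp)⟩,
    ⟨g, fun h0 => hg p hp (by rw [h0]; rfl)⟩, fun q hq => ?_⟩
  by_contra hqJ
  exact hg q hq ((isZero_charMod_obj K hJ hqJ).eq_of_src _ _)

end Interleaving

/-- geometric characterization of left `ε`-interleavings between interval
modules whose intervals lie in an intersection-closed, flow-closed family of intervals. -/
theorem left_interleaving_characterization (Φ : RFlow P)
    (F : Set (Set P)) (hFiv : ∀ S ∈ F, IsInterval S)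
    (hFcap : ∀ S ∈ F, ∀ T ∈ F, S ∩ T ∈ F)
    (hFflow : ∀ S ∈ F, ∀ t : ℝ, Φ.Ω t '' S ∈ F)
    {ε : ℝ} (hε : 0 ≤ ε) (I J : Set P) (hIF : I ∈ F) (hJF : J ∈ F) :
    LeftInterleaved K Φ hε (charMod K I (hFiv I hIF).1) (charMod K J (hFiv J hJF).1) ↔
      (IsTrivialIv K Φ (show (0:ℝ) ≤ 2 * ε by linarith) I (hFiv I hIF).1 ∨
       ((∃ f : charMod K I (hFiv I hIF).1 ⟶
            charMod K (Φ.shiftSet J ε) (Φ.posetConvex_shiftSet (hFiv J hJF).1 ε), f ≠ 0) ∧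
        (∃ g : charMod K J (hFiv J hJF).1 ⟶
            charMod K (Φ.shiftSet I ε) (Φ.posetConvex_shiftSet (hFiv I hIF).1 ε), g ≠ 0) ∧
        ((I ∩ Φ.shiftSet I (2 * ε)).Nonempty ∧
          I ∩ Φ.shiftSet I (2 * ε) ⊆ Φ.shiftSet J ε))) := by
  have hconn : ∀ S ∈ F, ∀ T ∈ F, PosetConnected (S ∩ Φ.shiftSet T ε) := fun S hS T hT =>
    (hFiv _ (hFcap S hS _ (Φ.shiftSet_eq_image T ε ▸ hFflow T hT (-ε)))).2
  constructor
  · intro h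
    by_cases htriv : IsTrivialIv K Φ (show (0:ℝ) ≤ 2 * ε by linarith) I (hFiv I hIF).1
    · exact Or.inl htriv
    rw [isTrivialIv_iff, ← Set.not_nonempty_iff_eq_empty, not_not] at htriv
    obtain ⟨hf, hg, hsub⟩ := h.exists_ne_zero_and_subset K Φ hε _ _ htriv
    exact Or.inr ⟨hf, hg, htriv, hsub⟩
  · rintro (htriv | ⟨⟨f, hf⟩, ⟨g, hg⟩, -, hsub⟩)
    · exact leftInterleaved_of_isTrivialIv K Φ hε _ _ _ htriv
    · exact leftInterleaved_of_isValid K Φ hε _ _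
        (isValid_inter_of_ne_zero K f (hconn I hIF J hJF) hf)
        (isValid_inter_of_ne_zero K g (hconn J hJF I hIF) hg) hsub
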